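/- arXiv:1102.4911 — 2 statements merged into one kernel-verified Lean document; each statement's English description precedes it below -/
import Mathlib

section
/- For a rational number a/q with gcd(a,q)=1, if n is an integer with gcd(n,q)=d and n=md, then e(an/q) = (1/φ(q/d)) · Σ_{χ mod q/d} τ(χ̄) χ(ma), where τ(χ) = Σ_{b mod q} χ(b) e(b/q) is the Gauss sum and e(x)=e^{2πix}. -/
/-!
Write `N = q / d`. Since `n = m d` and `q = d N`, we have `e(an/q) = e(ma/N)`, and `ma` is a unit
mod `N`. Expanding each Gauss sum, the right-hand side becomes
`φ(N)⁻¹ ∑_b e(b/N) ∑_χ χ̄(b) χ(ma)`, and orthogonality of Dirichlet characters kills every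
term except `b = ma`.
-/

open Complex

/-- The Gauss sum `τ(χ) = ∑_{b mod N} χ(b) e(b/N)` with `e(x) = e^{2πix}`
(set to `0` in the degenerate case `N = 0`). -/
noncomputable def gaussSumE (N : ℕ) (χ : DirichletCharacter ℂ N) : ℂ :=
  if h : N = 0 then 0 else
    haveI : NeZero N := ⟨h⟩
    ∑ b : ZMod N, χ b * Complex.exp (2 * Real.pi * I * (b.val : ℂ) / N)

/-- The complex-conjugate character `χ̄`. -/
noncomputable def conjChar {N : ℕ} (χ : DirichletCharacter ℂ N) : DirichletCharacter ℂ N :=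
  χ.ringHomComp (starRingEnd ℂ)

namespace DirichletCharacter

variable (R : Type*) [CommRing R] [IsDomain R] {n : ℕ} [NeZero n]
  [HasEnoughRootsOfUnity R (Monoid.exponent (ZMod n)ˣ)]

theorem sum_inv_apply_mul_apply_eq {c : ZMod n} (hc : IsUnit c) (b : ZMod n) :
    ∑ χ : DirichletCharacter R n, χ⁻¹ b * χ c = if b = c then (n.totient : R) else 0 := by
  obtain ⟨u, rfl⟩ := hc
  calc ∑ χ : DirichletCharacter R n, χ⁻¹ b * χ u
      = ∑ χ : DirichletCharacter R n, χ (u : ZMod n)⁻¹ * χ b := by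
        refine (Fintype.sum_equiv (Equiv.inv _) _ _ fun χ ↦ ?_).symm
        rw [Equiv.inv_apply, inv_inv, MulChar.inv_apply, Ring.inverse_unit, ZMod.inv_coe_unit,
          mul_comm]
    _ = _ := by rw [sum_char_inv_mul_char_eq R u.isUnit b]; exact if_congr eq_comm rfl rfl

theorem sum_gaussSum_inv_mul_apply {c : ZMod n} (hc : IsUnit c) (ψ : AddChar (ZMod n) R) :
    ∑ χ : DirichletCharacter R n, gaussSum χ⁻¹ ψ * χ c = n.totient * ψ c := by
  simp only [gaussSum, Finset.sum_mul]
  rw [Finset.sum_comm]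
  simp only [mul_right_comm _ (ψ _), ← Finset.sum_mul, sum_inv_apply_mul_apply_eq R hc,
    ite_mul, zero_mul, Finset.sum_ite_eq', Finset.mem_univ, if_true]

end DirichletCharacter

lemma conjChar_eq_inv {N : ℕ} (χ : DirichletCharacter ℂ N) : conjChar χ = χ⁻¹ :=
  MulChar.ext fun b ↦ MulChar.star_apply' χ b

lemma gaussSumE_eq_gaussSum (N : ℕ) [NeZero N] (χ : DirichletCharacter ℂ N) :
    gaussSumE N χ = gaussSum χ ZMod.stdAddChar := by
  rw [gaussSumE, dif_neg (NeZero.ne N)]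
  simp [gaussSum, ZMod.stdAddChar_apply, ZMod.toCircle_apply]

lemma isCoprime_mul_div_gcd {q : ℕ} {a n m : ℤ} {d : ℕ}
    (ha : Int.gcd a q = 1) (hd : Int.gcd n q = d) (hn : n = m * d) (hd0 : 0 < d) (hdq : d ∣ q) :
    IsCoprime (m * a) ((q / d : ℕ) : ℤ) := by
  have hm : IsCoprime m ((q / d : ℕ) : ℤ) := by
    have := Int.gcd_ediv_gcd_ediv_gcd (i := n) (j := q) (hd ▸ hd0)
    rw [hd, hn, Int.mul_ediv_cancel _ (by exact_mod_cast hd0.ne')] at this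
    rw [Int.isCoprime_iff_gcd_eq_one]
    exact_mod_cast this
  have hqd : ((q / d : ℕ) : ℤ) ∣ q := Int.natCast_dvd_natCast.mpr (Nat.div_dvd_of_dvd hdq)
  exact hm.mul_left ((Int.isCoprime_iff_gcd_eq_one.mpr ha).of_isCoprime_of_dvd_right hqd)

/-- If `gcd(a,q)=1`, `gcd(n,q)=d` and `n = m d`, then
`e(an/q) = (1/φ(q/d)) ∑_{χ mod q/d} τ(χ̄) χ(ma)`. -/
theorem additive_char_decomposition (q : ℕ) (hq : 0 < q) (a n m : ℤ) (d : ℕ)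
    (ha : Int.gcd a q = 1) (hd : Int.gcd n q = d) (hn : n = m * d) :
    Complex.exp (2 * Real.pi * I * a * n / q) =
      (Nat.totient (q / d) : ℂ)⁻¹ *
        ∑ χ : DirichletCharacter ℂ (q / d),
          gaussSumE (q / d) (conjChar χ) * χ ((m * a : ℤ) : ZMod (q / d)) := by
  have hd0 : 0 < d := hd ▸ Int.gcd_pos_of_ne_zero_right n (by exact_mod_cast hq.ne')
  have hdq : d ∣ q := by exact_mod_cast hd ▸ Int.gcd_dvd_right n q
  have hqd : 0 < q / d := Nat.div_pos (Nat.le_of_dvd hq hdq) hd0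
  have : NeZero (q / d) := ⟨hqd.ne'⟩
  have hunit : IsUnit ((m * a : ℤ) : ZMod (q / d)) :=
    (ZMod.coe_int_isUnit_iff_isCoprime _ _).mpr (isCoprime_mul_div_gcd ha hd hn hd0 hdq).symm
  have hexp :
      exp (2 * Real.pi * I * a * n / q) = ZMod.stdAddChar ((m * a : ℤ) : ZMod (q / d)) := by
    have hqC : (q : ℂ) = d * (q / d : ℕ) := by exact_mod_cast (Nat.mul_div_cancel' hdq).symm
    have hdC : (d : ℂ) ≠ 0 := by exact_mod_cast hd0.ne'
    rw [ZMod.stdAddChar_coe, hn, hqC]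
    congr 1
    push_cast
    field_simp
  simp only [conjChar_eq_inv, gaussSumE_eq_gaussSum]
  rw [DirichletCharacter.sum_gaussSum_inv_mul_apply ℂ hunit, hexp,
    inv_mul_cancel_left₀ (by exact_mod_cast (Nat.totient_pos.mpr hqd).ne')]
end

section
/- The Euler product 𝔖_f*(c) = Π_p (1 + (1/p^{3c-1})(((p-1)/p)((p - p^c)/(p-1))³ - 1)) converges absolutely and defines an analytic function of c on the half-plane Re(c) > 1/2, and is uniformly bounded on any half-plane Re(c) > 1/2 + ε. -/
/-!
Put `x = p^{-c}` and `q = 1/p`. Clearing denominators, the `p`-th Euler factor is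
`1 + (x³(2 - q) - 3x² + 3xq - q²) / (1 - q)²`, so for `Re c ≥ σ ≥ 1/2` (where `|x|² ≤ p^{-2σ}` and
`|x| q ≤ p^{-3/2}`) its distance to `1` is `O(p^{-2σ} + p^{-3/2})`, uniformly in `c`. For `σ > 1/2`
this majorant is summable over the primes. That gives absolute convergence, locally uniform
convergence of the partial products on the half-plane (so the product is holomorphic by
Weierstrass' theorem), and the bound `|∏ (1 + a_p)| ≤ exp (∑ |a_p|)` uniformly on `Re c ≥ σ`.
-/

open Complex

/-- The Euler factor of `𝔖_f*(c)` at the prime `p`: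
`1 + (1/p^{3c-1})(((p-1)/p)((p-p^c)/(p-1))³ - 1)`. -/
noncomputable def sfStarFactor (c : ℂ) (p : Nat.Primes) : ℂ :=
  1 + (((p : ℕ) : ℂ) ^ (3 * c - 1))⁻¹ *
    (((((p : ℕ) : ℂ) - 1) / ((p : ℕ) : ℂ)) *
      ((((p : ℕ) : ℂ) - ((p : ℕ) : ℂ) ^ c) / (((p : ℕ) : ℂ) - 1)) ^ 3 - 1)

theorem norm_cubic_div_one_sub_sq_le {𝕜 : Type*} [RCLike 𝕜] {x q : 𝕜}
    (hx : ‖x‖ ≤ 1) (hq : ‖q‖ ≤ 1 / 2) :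
    ‖(x ^ 3 * (2 - q) - 3 * x ^ 2 + 3 * x * q - q ^ 2) / (1 - q) ^ 2‖ ≤
      24 * (‖x‖ ^ 2 + ‖x‖ * ‖q‖ + ‖q‖ ^ 2) := by
  have hnum : ‖x ^ 3 * (2 - q) - 3 * x ^ 2 + 3 * x * q - q ^ 2‖ ≤
      6 * (‖x‖ ^ 2 + ‖x‖ * ‖q‖ + ‖q‖ ^ 2) := by
    have h2q : ‖2 - q‖ ≤ 3 := (norm_sub_le _ _).trans (by rw [RCLike.norm_ofNat]; linarith)
    have hx3 : ‖x‖ ^ 3 ≤ ‖x‖ ^ 2 := pow_le_pow_of_le_one (norm_nonneg _) hx (by norm_num)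
    calc _ ≤ ‖x ^ 3 * (2 - q)‖ + ‖3 * x ^ 2‖ + ‖3 * x * q‖ + ‖q ^ 2‖ :=
          norm_sub_le_of_le (norm_add_le_of_le (norm_sub_le_of_le le_rfl le_rfl) le_rfl) le_rfl
      _ = ‖x‖ ^ 3 * ‖2 - q‖ + 3 * ‖x‖ ^ 2 + 3 * (‖x‖ * ‖q‖) + ‖q‖ ^ 2 := by simp [mul_assoc]
      _ ≤ _ := by nlinarith [norm_nonneg x, norm_nonneg q, norm_nonneg (2 - q)]
  have hden : 1 / 4 ≤ ‖1 - q‖ ^ 2 := by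
    have := norm_sub_norm_le (1 : 𝕜) q
    rw [norm_one] at this
    nlinarith
  rw [norm_div, norm_pow, div_le_iff₀ (by positivity)]
  nlinarith [norm_nonneg x, norm_nonneg q, mul_nonneg (norm_nonneg x) (norm_nonneg q)]

theorem differentiableOn_tprod_one_add_of_summable_norm {ι : Type*} {f : ι → ℂ → ℂ}
    {U : Set ℂ} {u : ι → ℝ} (hu : Summable u) (hf : ∀ i, DifferentiableOn ℂ (f i) U)
    (hU : IsOpen U) (hf_le : ∀ i, ∀ w ∈ U, ‖f i w‖ ≤ u i) :
    DifferentiableOn ℂ (fun w ↦ ∏' i, (1 + f i w)) U := by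
  refine (hu.hasProdLocallyUniformlyOn_one_add hU (.of_forall hf_le)
    fun i ↦ (hf i).continuousOn).differentiableOn (.of_forall fun s ↦ ?_) hU
  simpa [Finset.prod_fn] using DifferentiableOn.finsetProd fun i _ ↦ (hf i).const_add 1

theorem norm_tprod_one_add_le_exp_tsum {ι R : Type*} [NormedCommRing R] [NormOneClass R]
    [CompleteSpace R] {f : ι → R} (hf : Summable fun i ↦ ‖f i‖) :
    ‖∏' i, (1 + f i)‖ ≤ Real.exp (∑' i, ‖f i‖) := by
  refine le_of_tendsto' (tendsto_norm.comp (multipliable_one_add_of_summable hf).hasProd)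
    fun s ↦ ?_
  calc ‖∏ i ∈ s, (1 + f i)‖ ≤ ‖∏ i ∈ s, (1 + f i) - 1‖ + ‖(1 : R)‖ := norm_le_norm_sub_add _ _
    _ ≤ Real.exp (∑ i ∈ s, ‖f i‖) - 1 + 1 := by
      rw [norm_one]; gcongr; exact s.norm_prod_one_add_sub_one_le f
    _ ≤ Real.exp (∑' i, ‖f i‖) := by
      rw [sub_add_cancel]; gcongr; exact hf.sum_le_tsum _ fun _ _ ↦ norm_nonneg _

theorem sfStarFactor_sub_one_eq (c : ℂ) (p : Nat.Primes) :
    sfStarFactor c p - 1 =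
      (((p : ℂ) ^ (-c)) ^ 3 * (2 - (p : ℂ)⁻¹) - 3 * ((p : ℂ) ^ (-c)) ^ 2
        + 3 * (p : ℂ) ^ (-c) * (p : ℂ)⁻¹ - (p : ℂ)⁻¹ ^ 2) / (1 - (p : ℂ)⁻¹) ^ 2 := by
  have hp : (p : ℂ) ≠ 0 := Nat.cast_ne_zero.mpr p.prop.ne_zero
  have hp1 : (p : ℂ) - 1 ≠ 0 := sub_ne_zero.mpr (Nat.cast_ne_one.mpr p.prop.ne_one)
  have hX : (p : ℂ) ^ c ≠ 0 := cpow_ne_zero_iff.mpr (Or.inl hp)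
  have h3 : (p : ℂ) ^ (3 * c - 1) = ((p : ℂ) ^ c) ^ 3 / p := by
    rw [cpow_sub _ _ hp, cpow_one, ← cpow_nat_mul]; norm_num
  rw [sfStarFactor, h3, cpow_neg]
  generalize (p : ℂ) ^ c = X at hX ⊢
  field_simp
  ring

noncomputable def sfStarMajorant (σ : ℝ) (p : Nat.Primes) : ℝ :=
  48 * ((p : ℝ) ^ (-2 * σ) + (p : ℝ) ^ (-3 / 2 : ℝ))

theorem summable_sfStarMajorant {σ : ℝ} (hσ : 1 / 2 < σ) : Summable (sfStarMajorant σ) :=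
  ((Nat.Primes.summable_rpow.mpr (by linarith)).add
    (Nat.Primes.summable_rpow.mpr (by norm_num))).mul_left 48

theorem norm_sfStarFactor_sub_one_le {σ : ℝ} {c : ℂ} (hσ : 1 / 2 ≤ σ) (hc : σ ≤ c.re)
    (p : Nat.Primes) : ‖sfStarFactor c p - 1‖ ≤ sfStarMajorant σ p := by
  have hp : (1 : ℝ) ≤ p := by exact_mod_cast p.prop.one_lt.le
  have hp0 : (0 : ℝ) < p := by positivity
  have hx : ‖(p : ℂ) ^ (-c)‖ ≤ (p : ℝ) ^ (-σ) := by
    rw [norm_natCast_cpow_of_pos p.prop.pos, Complex.neg_re]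
    exact Real.rpow_le_rpow_of_exponent_le hp (by linarith)
  have hx_half : (p : ℝ) ^ (-σ) ≤ (p : ℝ) ^ (-1 / 2 : ℝ) :=
    Real.rpow_le_rpow_of_exponent_le hp (by linarith)
  have hq : ‖(p : ℂ)⁻¹‖ = (p : ℝ) ^ (-1 : ℝ) := by simp [Real.rpow_neg_one]
  have hxx : ‖(p : ℂ) ^ (-c)‖ ^ 2 ≤ (p : ℝ) ^ (-2 * σ) :=
    calc _ ≤ ((p : ℝ) ^ (-σ)) ^ 2 := pow_le_pow_left₀ (norm_nonneg _) hx 2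
      _ = _ := by rw [← Real.rpow_natCast, ← Real.rpow_mul hp0.le]; ring_nf
  have hxq : ‖(p : ℂ) ^ (-c)‖ * ‖(p : ℂ)⁻¹‖ ≤ (p : ℝ) ^ (-3 / 2 : ℝ) :=
    calc _ ≤ (p : ℝ) ^ (-1 / 2 : ℝ) * (p : ℝ) ^ (-1 : ℝ) := by
          rw [hq]; exact mul_le_mul_of_nonneg_right (hx.trans hx_half) (by positivity)
      _ = _ := by rw [← Real.rpow_add hp0]; norm_num
  have hqq : ‖(p : ℂ)⁻¹‖ ^ 2 ≤ (p : ℝ) ^ (-3 / 2 : ℝ) :=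
    calc _ = (p : ℝ) ^ (-2 : ℝ) := by rw [hq, sq, ← Real.rpow_add hp0]; norm_num
      _ ≤ _ := Real.rpow_le_rpow_of_exponent_le hp (by norm_num)
  have hx1 : ‖(p : ℂ) ^ (-c)‖ ≤ 1 :=
    hx.trans (Real.rpow_le_one_of_one_le_of_nonpos hp (by linarith))
  have hq_half : ‖(p : ℂ)⁻¹‖ ≤ 1 / 2 := by
    rw [norm_inv, Complex.norm_natCast, one_div]
    exact inv_anti₀ (by norm_num) (by exact_mod_cast p.prop.two_le)
  rw [sfStarFactor_sub_one_eq, sfStarMajorant]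
  refine (norm_cubic_div_one_sub_sq_le hx1 hq_half).trans ?_
  linarith [Real.rpow_nonneg hp0.le (-2 * σ)]

theorem differentiable_sfStarFactor (p : Nat.Primes) :
    Differentiable ℂ (sfStarFactor · p) := by
  have hp : (p : ℂ) ≠ 0 := Nat.cast_ne_zero.mpr p.prop.ne_zero
  unfold sfStarFactor
  fun_prop (disch := simp [hp])

theorem differentiableOn_tprod_sfStarFactor {σ : ℝ} (hσ : 1 / 2 < σ) :
    DifferentiableOn ℂ (fun c ↦ ∏' p, sfStarFactor c p) {c | σ < c.re} := by
  simpa only [add_sub_cancel] using differentiableOn_tprod_one_add_of_summable_norm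
    (f := fun p c ↦ sfStarFactor c p - 1) (summable_sfStarMajorant hσ)
    (fun p ↦ ((differentiable_sfStarFactor p).sub_const 1).differentiableOn)
    (isOpen_lt continuous_const continuous_re)
    fun p c hc ↦ norm_sfStarFactor_sub_one_le hσ.le hc.le p

theorem norm_tprod_sfStarFactor_le {σ : ℝ} {c : ℂ} (hσ : 1 / 2 < σ) (hc : σ ≤ c.re) :
    ‖∏' p, sfStarFactor c p‖ ≤ Real.exp (∑' p, sfStarMajorant σ p) := by
  have hbound := norm_sfStarFactor_sub_one_le hσ.le hc
  have hsum := (summable_sfStarMajorant hσ).of_nonneg_of_le (fun _ ↦ norm_nonneg _) hbound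
  simpa only [add_sub_cancel] using (norm_tprod_one_add_le_exp_tsum hsum).trans
    (Real.exp_le_exp.mpr (hsum.tsum_le_tsum hbound (summable_sfStarMajorant hσ)))

/-- The Euler product `𝔖_f*(c) = ∏_p (1 + (1/p^{3c-1})(((p-1)/p)((p-p^c)/(p-1))³ - 1))`
converges absolutely on `Re(c) > 1/2`, defines an analytic function there, and is
uniformly bounded on any half-plane `Re(c) > 1/2 + ε`. -/
theorem sfStar_convergence_analytic_bounded :
    (∀ c : ℂ, 1 / 2 < c.re → Summable fun p : Nat.Primes => ‖sfStarFactor c p - 1‖) ∧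
    AnalyticOn ℂ (fun c : ℂ => ∏' p : Nat.Primes, sfStarFactor c p) {c : ℂ | 1 / 2 < c.re} ∧
    ∀ ε > (0 : ℝ), ∃ C : ℝ, ∀ c : ℂ, 1 / 2 + ε < c.re →
      ‖∏' p : Nat.Primes, sfStarFactor c p‖ ≤ C := by
  refine ⟨fun c hc ↦ ?_, ?_, fun ε hε ↦ ⟨_, fun c hc ↦
    norm_tprod_sfStarFactor_le (by linarith) hc.le⟩⟩
  · exact (summable_sfStarMajorant hc).of_nonneg_of_le (fun _ ↦ norm_nonneg _)
      (norm_sfStarFactor_sub_one_le hc.le le_rfl)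
  · refine (DifferentiableOn.analyticOnNhd (fun c (hc : 1 / 2 < c.re) ↦ ?_)
      (isOpen_lt continuous_const continuous_re)).analyticOn
    have hσ : 1 / 2 < (1 / 2 + c.re) / 2 := by linarith
    refine ((differentiableOn_tprod_sfStarFactor hσ).differentiableAt ?_).differentiableWithinAt
    exact (isOpen_lt continuous_const continuous_re).mem_nhds (show _ < c.re by linarith)
end
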